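/- For every n-RQ Q = (A, {s₁, …, s_k}) there exist n-RQs Q̃¹, …, Q̃ᵏ such that for each j ∈ {1,…,k}, Q̃ʲ(t) = (A, {s_j})(t) for every data tree t and Q̃ʲ satisfies the normal-form conditions (its selection set is a product S₁ × ⋯ × S_n of pairwise disjoint state sets, and every accepting run of its automaton assigns, for each i, a state of Sᵢ to exactly one position), and such that Q(t) = ⋃_{j=1}^{k} Q̃ʲ(t) for every data tree t. -/

import Mathlib

/-! Data trees over a ranked alphabet: each node is labeled by a symbol
(respecting arities) and optionally carries a data value in ℕ. -/

inductive DTree (S : Type) (ar : S → ℕ) : Type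
  | node (σ : S) (val : Option ℕ) (children : Fin (ar σ) → DTree S ar) : DTree S ar

namespace DTree

variable {S : Type} {ar : S → ℕ}

/-- Root label. -/
def label : DTree S ar → S
  | node σ _ _ => σ

/-- Root data value (if any). -/
def rootVal : DTree S ar → Option ℕ
  | node _ v _ => v

/-- Subtree at a position (a position is a list of child indices). -/
def subtreeAt : DTree S ar → List ℕ → Option (DTree S ar)
  | t, [] => some t
  | node σ _ c, i :: p => if h : i < ar σ then (c ⟨i, h⟩).subtreeAt p else none

/-- The set of positions of a data tree. -/
def pos (t : DTree S ar) : Set (List ℕ) := {v | (t.subtreeAt v).isSome}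

/-- The data value carried at position `v` (if the position exists and carries one). -/
def valAt (t : DTree S ar) (v : List ℕ) : Option ℕ :=
  (t.subtreeAt v).bind rootVal

/-- `t⁻`: erase all data values. A (plain) tree is a data tree of the form `t.erase`. -/
def erase : DTree S ar → DTree S ar
  | node σ _ c => node σ none fun i => (c i).erase

/-- A data tree is proper if every node carries a data value. -/
inductive Proper : DTree S ar → Prop
  | node (σ : S) (ν : ℕ) (c : Fin (ar σ) → DTree S ar) :
      (∀ i, Proper (c i)) → Proper (DTree.node σ (some ν) c)

/-- `t^(v←ν)`: set the data value at position `v` to `ν`. -/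
def setVal : DTree S ar → List ℕ → ℕ → DTree S ar
  | node σ _w c, [], ν => node σ (some ν) c
  | node σ w c, i :: p, ν =>
      node σ w fun k => if (k : ℕ) = i then (c k).setVal p ν else c k

end DTree

/-! Tree automata. -/

/-- A (top-down) tree automaton over the ranked alphabet `(S, ar)` with state set `P`:
initial states and transition rules `p → σ(p₁,…,p_n)` (with `n = ar σ`). -/
structure TA (S : Type) (ar : S → ℕ) (P : Type) where
  init : Set P
  rules : P → (σ : S) → (Fin (ar σ) → P) → Prop

namespace TA

variable {S : Type} {ar : S → ℕ} {P : Type}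

/-- `m` is an accepting run of `A` on `t`: the root gets an initial state and every
position is consistent with some transition rule.  (Runs only look at labels, so a
run on `t` is the same thing as a run on `t⁻`.) -/
def IsRun (A : TA S ar P) (t : DTree S ar) (m : List ℕ → P) : Prop :=
  m [] ∈ A.init ∧
    ∀ v s, t.subtreeAt v = some s →
      A.rules (m v) s.label fun i => m (v ++ [(i : ℕ)])

/-- The language of a tree automaton. -/
def Lang (A : TA S ar P) : Set (DTree S ar) := {t | ∃ m, A.IsRun t m}

/-- `A` is reduced: every state is assigned to some position by some accepting run
(hence there are no useless states, and so no useless rules). -/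
def Reduced (A : TA S ar P) : Prop :=
  ∀ p : P, ∃ (t : DTree S ar) (m : List ℕ → P) (v : List ℕ),
    A.IsRun t m ∧ v ∈ t.pos ∧ m v = p

end TA

/-! Run-based n-ary queries. -/

/-- A run-based `n`-ary query `(A, S)`: a tree automaton together with a set of
`n`-tuples of states. -/
structure NRQ (S : Type) (ar : S → ℕ) (P : Type) (n : ℕ) where
  aut : TA S ar P
  sel : Set (Fin n → P)

namespace NRQ

variable {S : Type} {ar : S → ℕ} {P : Type} {n : ℕ}

/-- `Q(t)`: the set of position tuples selected by some accepting run on `t⁻`. -/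
def ans (Q : NRQ S ar P n) (t : DTree S ar) : Set (Fin n → List ℕ) :=
  {vs | (∀ i, vs i ∈ t.pos) ∧
    ∃ m, Q.aut.IsRun t.erase m ∧ (fun i => m (vs i)) ∈ Q.sel}

/-- `val(Q(t))`: the corresponding tuples of data values. -/
def valAns (Q : NRQ S ar P n) (t : DTree S ar) : Set (Fin n → ℕ) :=
  {ds | ∃ vs ∈ Q.ans t, ∀ i, t.valAt (vs i) = some (ds i)}

end NRQ

/-! Contexts over an output alphabet, with variables `x₁,…,x_n`. -/

inductive Ctx (D : Type) (ar : D → ℕ) (n : ℕ) : Type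
  | var (i : Fin n)
  | node (d : D) (children : Fin (ar d) → Ctx D ar n)

namespace Ctx

variable {D : Type} {ar : D → ℕ} {n : ℕ}

/-- Variable `i` occurs in the context. -/
def HasVar : Ctx D ar n → Fin n → Prop
  | var j, i => j = i
  | node _ c, i => ∃ k, (c k).HasVar i

/-- Variable `i` occurs at position `v` of the context. -/
def VarAt : Ctx D ar n → Fin n → List ℕ → Prop
  | var j, i, v => j = i ∧ v = []
  | node _ _, _, [] => False
  | node d c, i, k :: p => ∃ h : k < ar d, (c ⟨k, h⟩).VarAt i p

/-- Position `v` of the context is labeled by an output symbol. -/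
def SymAt : Ctx D ar n → List ℕ → Prop
  | var _, _ => False
  | node _ _, [] => True
  | node d c, k :: p => ∃ h : k < ar d, (c ⟨k, h⟩).SymAt p

/-- The context is linear: each variable occurs at most once. -/
def Linear (C : Ctx D ar n) : Prop :=
  ∀ i v w, C.VarAt i v → C.VarAt i w → v = w

/-- Instantiate a context: substitute `sub i` for variable `xᵢ`, and place the data
value `ν` at the (optional) designated position `j`; all other output nodes carry
no value. -/
def inst : Ctx D ar n → (Fin n → DTree D ar) → Option (List ℕ) → ℕ → DTree D ar
  | var i, sub, _, _ => sub i
  | node d c, sub, j, ν =>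
      DTree.node d (if j = some [] then some ν else none) fun k =>
        (c k).inst sub
          (match j with
            | some (m :: p) => if m = (k : ℕ) then some p else none
            | _ => none) ν

end Ctx

/-! Linear top-down data tree transducers (LinTT^V). -/

/-- A transduction rule `p(σ^(z)(x₁,…,x_n)) → C^(j←z)[p₁(x₁),…,p_n(x_n)]`
(the value-position designation `vpos` is optional). -/
structure TRule (S : Type) (arS : S → ℕ) (D : Type) (arD : D → ℕ) (P : Type) where
  st : P
  sym : S
  chst : Fin (arS sym) → P
  rhs : Ctx D arD (arS sym)
  vpos : Option (List ℕ)

/-- Well-formedness: the right-hand side is linear and the designated value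
position (if any) is an output-symbol-labeled position of the context. -/
def TRule.WF {S D P : Type} {arS : S → ℕ} {arD : D → ℕ} (r : TRule S arS D arD P) : Prop :=
  r.rhs.Linear ∧ ∀ v ∈ r.vpos, r.rhs.SymAt v

/-- A linear top-down data tree transducer. -/
structure LinTTV (S : Type) (arS : S → ℕ) (D : Type) (arD : D → ℕ) (P : Type) where
  init : Set P
  rules : Set (TRule S arS D arD P)
  wf : ∀ r ∈ rules, r.WF

namespace LinTTV

variable {S D P : Type} {arS : S → ℕ} {arD : D → ℕ}

/-- `Deriv Tr p t t'`: starting in state `p`, the transducer rewrites `p(t)` to the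
output data tree `t'`.  A rule applies to `p(σ^(ν)(t₁,…,t_n))` and produces its
right-hand side context instantiated at value `ν`, where each variable `xᵢ`
occurring in the context is replaced by an output of the derivation from
`pᵢ(tᵢ)` (subtrees at non-occurring variables are deleted). -/
inductive Deriv (Tr : LinTTV S arS D arD P) : P → DTree S arS → DTree D arD → Prop
  | step (r : TRule S arS D arD P) (hr : r ∈ Tr.rules) (ν : ℕ)
      (ts : Fin (arS r.sym) → DTree S arS) (sub : Fin (arS r.sym) → DTree D arD)
      (h : ∀ i, r.rhs.HasVar i → Deriv Tr (r.chst i) (ts i) (sub i)) :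
      Deriv Tr r.st (DTree.node r.sym (some ν) ts) (r.rhs.inst sub r.vpos ν)

/-- `rel Tr t t'` means `(t, t') ∈ rel(Tr)`: `t` is a proper input data tree and
`p_I(t) ⇒* t'` for some initial state `p_I`. -/
def rel (Tr : LinTTV S arS D arD P) (t : DTree S arS) (t' : DTree D arD) : Prop :=
  t.Proper ∧ ∃ p ∈ Tr.init, Tr.Deriv p t t'

/-- The domain of the transducer. -/
def dom (Tr : LinTTV S arS D arD P) : Set (DTree S arS) := {t | ∃ t', Tr.rel t t'}

/-- The range of the transducer. -/
def rng (Tr : LinTTV S arS D arD P) : Set (DTree D arD) := {t' | ∃ t, Tr.rel t t'}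

/-- `Tr⁻¹(t_d)`. -/
def preim (Tr : LinTTV S arS D arD P) (td : DTree D arD) : Set (DTree S arS) :=
  {t | Tr.rel t td}

/-- Deterministic: exactly one initial state, and for each state and input symbol
at most one rule. -/
def Deterministic (Tr : LinTTV S arS D arD P) : Prop :=
  (∃ p, Tr.init = {p}) ∧
    ∀ r₁ ∈ Tr.rules, ∀ r₂ ∈ Tr.rules, r₁.st = r₂.st → r₁.sym = r₂.sym → r₁ = r₂

end LinTTV

/-! Query preservation, stated for an arbitrary transformation relation
`R : input data trees → output data trees → Prop`. -/

/-- `R` (strongly) preserves `Q`: there is an `n`-ary query `Q'` over the output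
alphabet (a run-based query with a finite state set whose selected tuples consist of
pairwise distinct states) with `val(Q'(Tr(t))) = val(Q(t))` for all `t ∈ dom`
(Equation (1)). -/
def StronglyPreservesRel {S D PQ : Type} {arS : S → ℕ} {arD : D → ℕ} {n : ℕ}
    (R : DTree S arS → DTree D arD → Prop) (Q : NRQ S arS PQ n) : Prop :=
  ∃ (P' : Type) (_ : Fintype P') (Q' : NRQ D arD P' n),
    (∀ s ∈ Q'.sel, Function.Injective s) ∧
      ∀ t t', R t t' → Q'.valAns t' = Q.valAns t

/-- `R` weakly preserves `Q`: there is an `n`-ary query `Q'` over the output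
alphabet such that for every `t_d` in the range,
`val(Q'(t_d)) = ⋃_{t ∈ R⁻¹(t_d)} val(Q(t))` (Equation (2)). -/
def WeaklyPreservesRel {S D PQ : Type} {arS : S → ℕ} {arD : D → ℕ} {n : ℕ}
    (R : DTree S arS → DTree D arD → Prop) (Q : NRQ S arS PQ n) : Prop :=
  ∃ (P' : Type) (_ : Fintype P') (Q' : NRQ D arD P' n),
    (∀ s ∈ Q'.sel, Function.Injective s) ∧
      ∀ td, (∃ t, R t td) → Q'.valAns td = ⋃ t ∈ {t | R t td}, Q.valAns t

/-! To normalize `(A, {s})`, let the automaton guess at each node which index `i` (if any) it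
selects, in which case the node must carry `s i`, and let each state record the set of indices
selected in its subtree. Rules force that set to be the disjoint union of the node's own index
and the children's sets, and the root must cover every index, so each index is selected at
exactly one position. Conversely, a run of `A` selecting distinct positions `vs i` is decorated
by marking `vs i` with `i` and giving `v` the set of those `i` with `v` a prefix of `vs i`. -/

theorem List.eq_of_append_singleton_prefix {α : Type} {v w : List α} {a b : α}
    (ha : v ++ [a] <+: w) (hb : v ++ [b] <+: w) : a = b := by
  have h : v ++ [a] <+: v ++ [b] := List.prefix_of_prefix_length_le ha hb (by simp)
  simpa using h

namespace DTree

variable {S : Type} {ar : S → ℕ}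

theorem subtreeAt_append (t : DTree S ar) (v w : List ℕ) :
    t.subtreeAt (v ++ w) = (t.subtreeAt v).bind (·.subtreeAt w) := by
  induction v generalizing t with
  | nil => cases t; rfl
  | cons i v ih =>
    obtain ⟨σ, val, c⟩ := t
    simp only [List.cons_append, subtreeAt]
    split <;> simp [ih]

theorem subtreeAt_erase (t : DTree S ar) (v : List ℕ) :
    t.erase.subtreeAt v = (t.subtreeAt v).map erase := by
  induction v generalizing t with
  | nil => cases t; rfl
  | cons i v ih =>
    obtain ⟨σ, val, c⟩ := t
    simp only [erase, subtreeAt]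
    split <;> simp [ih]

@[simp]
theorem pos_erase (t : DTree S ar) : t.erase.pos = t.pos := by
  ext v
  simp [pos, subtreeAt_erase]

theorem nil_mem_pos (t : DTree S ar) : [] ∈ t.pos := by
  simp [pos, subtreeAt]

theorem cons_mem_pos_node {σ : S} {val : Option ℕ} {c : Fin (ar σ) → DTree S ar} {k : ℕ}
    {w : List ℕ} : k :: w ∈ (node σ val c).pos ↔ ∃ h : k < ar σ, w ∈ (c ⟨k, h⟩).pos := by
  simp only [pos, Set.mem_ofPred_eq, subtreeAt]
  split <;> simp [*]

theorem exists_mem_pos_node {σ : S} {val : Option ℕ} {c : Fin (ar σ) → DTree S ar}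
    {p : List ℕ → Prop} :
    (∃ w ∈ (node σ val c).pos, p w) ↔ p [] ∨ ∃ k : Fin (ar σ), ∃ w ∈ (c k).pos, p (k :: w) := by
  constructor
  · rintro ⟨_ | ⟨k, w⟩, hw, hp⟩
    · exact .inl hp
    · obtain ⟨hk, hw⟩ := cons_mem_pos_node.1 hw
      exact .inr ⟨⟨k, hk⟩, w, hw, hp⟩
  · rintro (hp | ⟨k, w, hw, hp⟩)
    · exact ⟨[], nil_mem_pos _, hp⟩
    · exact ⟨k :: w, cons_mem_pos_node.2 ⟨k.isLt, hw⟩, hp⟩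

theorem lt_of_append_cons_mem_pos {t s : DTree S ar} {v w : List ℕ} {k : ℕ}
    (hv : t.subtreeAt v = some s) (h : v ++ k :: w ∈ t.pos) : k < ar s.label := by
  obtain ⟨σ, val, c⟩ := s
  simp only [pos, Set.mem_ofPred_eq, subtreeAt_append, hv, Option.bind_some] at h
  exact (cons_mem_pos_node.1 h).1

theorem prefix_iff_eq_or_exists_child_prefix {t s : DTree S ar} {v w : List ℕ}
    (hv : t.subtreeAt v = some s) (hw : w ∈ t.pos) :
    v <+: w ↔ v = w ∨ ∃ k : Fin (ar s.label), v ++ [(k : ℕ)] <+: w := by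
  constructor
  · rintro ⟨_ | ⟨k, r⟩, rfl⟩
    · exact .inl (List.append_nil v).symm
    · exact .inr ⟨⟨k, lt_of_append_cons_mem_pos hv hw⟩, r, by simp⟩
  · rintro (rfl | ⟨k, hk⟩)
    · exact List.prefix_refl v
    · exact (List.prefix_append v _).trans hk

end DTree

namespace TA

variable {S P : Type} {ar : S → ℕ}

def Consistent (A : TA S ar P) (t : DTree S ar) (m : List ℕ → P) : Prop :=
  ∀ v s, t.subtreeAt v = some s → A.rules (m v) s.label fun i => m (v ++ [(i : ℕ)])

variable {A : TA S ar P} {σ : S} {val : Option ℕ} {c : Fin (ar σ) → DTree S ar}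
  {m : List ℕ → P}

theorem Consistent.rules_root (hm : A.Consistent (.node σ val c) m) :
    A.rules (m []) σ fun k => m [(k : ℕ)] :=
  hm [] _ rfl

theorem Consistent.child (hm : A.Consistent (.node σ val c) m) (k : Fin (ar σ)) :
    A.Consistent (c k) fun w => m (k :: w) :=
  fun v s hv => hm ((k : ℕ) :: v) s (by simpa [DTree.subtreeAt] using hv)

end TA

theorem NRQ.ans_mk_iUnion {S P ι : Type} {ar : S → ℕ} {n : ℕ} (A : TA S ar P)
    (F : ι → Set (Fin n → P)) (t : DTree S ar) :
    (NRQ.mk A (⋃ j, F j)).ans t = ⋃ j, (NRQ.mk A (F j)).ans t := by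
  ext vs
  simp only [NRQ.ans, Set.mem_iUnion, Set.mem_ofPred_eq]
  constructor
  · rintro ⟨hvs, m, hm, j, hj⟩
    exact ⟨j, hvs, m, hm, hj⟩
  · rintro ⟨j, hvs, m, hm, hj⟩
    exact ⟨hvs, m, hm, j, hj⟩

structure MarkState (P : Type) (n : ℕ) where
  state : P
  mark : Option (Fin n)
  covered : Finset (Fin n)

namespace MarkState

variable {P : Type} {n : ℕ}

instance [Fintype P] : Fintype (MarkState P n) :=
  Fintype.ofEquiv (P × Option (Fin n) × Finset (Fin n))
    { toFun := fun x => ⟨x.1, x.2.1, x.2.2⟩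
      invFun := fun x => (x.state, x.mark, x.covered)
      left_inv := fun _ => rfl
      right_inv := fun _ => rfl }

def markedAt (i : Fin n) : Set (MarkState P n) := {x | x.mark = some i}

theorem disjoint_markedAt {i i' : Fin n} (h : i ≠ i') :
    Disjoint (markedAt (P := P) i) (markedAt i') :=
  Set.disjoint_left.2 fun _ hi hi' => h (Option.some.inj (hi.symm.trans hi'))

end MarkState

open MarkState

structure MarkRule {S P : Type} {ar : S → ℕ} {n : ℕ} (A : TA S ar P) (s : Fin n → P)
    (x : MarkState P n) (σ : S) (ch : Fin (ar σ) → MarkState P n) : Prop where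
  rules_state : A.rules x.state σ fun k => (ch k).state
  state_eq_of_mark : ∀ i, x.mark = some i → x.state = s i
  mem_covered_iff : ∀ i, i ∈ x.covered ↔ x.mark = some i ∨ ∃ k, i ∈ (ch k).covered
  mark_ne_of_mem_covered : ∀ i k, i ∈ (ch k).covered → x.mark ≠ some i
  eq_of_mem_covered : ∀ i k k', i ∈ (ch k).covered → i ∈ (ch k').covered → k = k'

namespace TA

variable {S P : Type} {ar : S → ℕ} {n : ℕ}

def marking (A : TA S ar P) (s : Fin n → P) : TA S ar (MarkState P n) where
  init := {x | x.state ∈ A.init ∧ x.covered = Finset.univ}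
  rules := MarkRule A s

variable {A : TA S ar P} {s : Fin n → P} {t : DTree S ar}

theorem exists_marked_iff_mem_covered {m : List ℕ → MarkState P n}
    (hm : (A.marking s).Consistent t m) (i : Fin n) :
    (∃ w ∈ t.pos, (m w).mark = some i) ↔ i ∈ (m []).covered := by
  induction t generalizing m with
  | node σ val c ih =>
    have hr : MarkRule A s (m []) σ fun k => m [(k : ℕ)] := hm.rules_root
    rw [DTree.exists_mem_pos_node, hr.mem_covered_iff]
    exact or_congr_right (exists_congr fun k => ih k (hm.child k))

theorem marked_subsingleton {m : List ℕ → MarkState P n} (hm : (A.marking s).Consistent t m)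
    (i : Fin n) : {w ∈ t.pos | (m w).mark = some i}.Subsingleton := by
  induction t generalizing m with
  | node σ val c ih =>
    have hr : MarkRule A s (m []) σ fun k => m [(k : ℕ)] := hm.rules_root
    have hcov : ∀ k : Fin (ar σ), ∀ w ∈ (c k).pos,
        (m (k :: w)).mark = some i → i ∈ (m [(k : ℕ)]).covered :=
      fun k w hw hmark => (exists_marked_iff_mem_covered (hm.child k) i).1 ⟨w, hw, hmark⟩
    rintro (_ | ⟨k, w⟩) ⟨hw, hmw⟩ (_ | ⟨k', w'⟩) ⟨hw', hmw'⟩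
    · rfl
    · obtain ⟨hk', hw'⟩ := DTree.cons_mem_pos_node.1 hw'
      exact absurd hmw (hr.mark_ne_of_mem_covered i _ (hcov ⟨k', hk'⟩ w' hw' hmw'))
    · obtain ⟨hk, hw⟩ := DTree.cons_mem_pos_node.1 hw
      exact absurd hmw' (hr.mark_ne_of_mem_covered i _ (hcov ⟨k, hk⟩ w hw hmw))
    · obtain ⟨hk, hw⟩ := DTree.cons_mem_pos_node.1 hw
      obtain ⟨hk', hw'⟩ := DTree.cons_mem_pos_node.1 hw'
      obtain rfl : k = k' := congrArg Fin.val
        (hr.eq_of_mem_covered i ⟨k, hk⟩ ⟨k', hk'⟩ (hcov _ w hw hmw) (hcov _ w' hw' hmw'))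
      rw [ih ⟨k, hk⟩ (hm.child _) ⟨hw, hmw⟩ ⟨hw', hmw'⟩]

theorem existsUnique_markedAt {m : List ℕ → MarkState P n} (hm : (A.marking s).IsRun t m)
    (i : Fin n) : ∃! v, v ∈ t.pos ∧ m v ∈ markedAt i := by
  obtain ⟨w, hw⟩ := (exists_marked_iff_mem_covered hm.2 i).2 (by simp [hm.1.2])
  exact ⟨w, hw, fun w' hw' => marked_subsingleton hm.2 i hw' hw⟩

theorem IsRun.of_marking {m : List ℕ → MarkState P n} (hm : (A.marking s).IsRun t m) :
    A.IsRun t fun v => (m v).state :=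
  ⟨hm.1.1, fun v u hv => (hm.2 v u hv).rules_state⟩

theorem state_eq_of_marked {m : List ℕ → MarkState P n} (hm : (A.marking s).Consistent t m)
    {v : List ℕ} (hv : v ∈ t.pos) {i : Fin n} (h : (m v).mark = some i) : (m v).state = s i := by
  obtain ⟨u, hu⟩ := Option.isSome_iff_exists.1 hv
  exact (hm v u hu).state_eq_of_mark i h

noncomputable def liftRun (m : List ℕ → P) (vs : Fin n → List ℕ) (v : List ℕ) : MarkState P n :=
  ⟨m v, Function.partialInv vs v, Finset.univ.filter fun i => v <+: vs i⟩

theorem isRun_marking_liftRun {m : List ℕ → P} {vs : Fin n → List ℕ} (hm : A.IsRun t m)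
    (hvs : ∀ i, vs i ∈ t.pos) (hsel : ∀ i, m (vs i) = s i) (hinj : Function.Injective vs) :
    (A.marking s).IsRun t (liftRun m vs) := by
  have hmark : ∀ v i, Function.partialInv vs v = some i ↔ vs i = v :=
    fun v i => hinj.isPartialInv i v
  refine ⟨⟨hm.1, by ext; simp [liftRun]⟩, fun v u hv => ⟨hm.2 v u hv, ?_, ?_, ?_, ?_⟩⟩
  · intro i h
    simp only [liftRun, hmark] at h ⊢
    rw [← h, hsel]
  · intro i
    simp only [liftRun, Finset.mem_filter, Finset.mem_univ, true_and, hmark, eq_comm (a := vs i)]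
    exact DTree.prefix_iff_eq_or_exists_child_prefix hv (hvs i)
  · intro i k hk h
    simp only [liftRun, Finset.mem_filter, Finset.mem_univ, true_and, hmark] at hk h
    have := (h ▸ hk).length_le
    simp at this
  · intro i k k' hk hk'
    simp only [liftRun, Finset.mem_filter, Finset.mem_univ, true_and] at hk hk'
    exact Fin.ext (List.eq_of_append_singleton_prefix hk hk')

theorem ans_marking (hs : Function.Injective s) (t : DTree S ar) :
    (NRQ.mk (A.marking s) {g | ∀ i, g i ∈ markedAt i}).ans t = (NRQ.mk A {s}).ans t := by
  ext vs
  simp only [NRQ.ans, Set.mem_ofPred_eq, Set.mem_singleton_iff]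
  refine and_congr_right fun hvs => ⟨?_, ?_⟩
  · rintro ⟨m, hm, hsel⟩
    exact ⟨_, hm.of_marking,
      funext fun i => state_eq_of_marked hm.2 (by simpa using hvs i) (hsel i)⟩
  · rintro ⟨m, hm, hsel⟩
    have hinj : Function.Injective vs := fun i i' h => hs (by rw [← hsel]; simp only [h])
    refine ⟨liftRun m vs, isRun_marking_liftRun hm (by simpa using hvs) (congrFun hsel) hinj,
      fun i => (hinj.isPartialInv i (vs i)).2 rfl⟩

end TA

theorem nrq_union_of_normal_forms_general {S PQ : Type} {arS : S → ℕ} [Fintype PQ]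
    {n k : ℕ} (A : TA S arS PQ) (s : Fin k → Fin n → PQ)
    (hs : ∀ j, Function.Injective (s j)) :
    ∃ (P' : Fin k → Type) (_ : ∀ j, Fintype (P' j)) (A' : ∀ j, TA S arS (P' j))
      (SS : ∀ j, Fin n → Set (P' j)),
      (∀ j, ∀ i i', i ≠ i' → Disjoint (SS j i) (SS j i')) ∧
      (∀ j (t : DTree S arS) (m : List ℕ → P' j), (A' j).IsRun t m →
        ∀ i, ∃! v, v ∈ t.pos ∧ m v ∈ SS j i) ∧
      (∀ j (t : DTree S arS),
        (NRQ.mk (A' j) {g | ∀ i, g i ∈ SS j i}).ans t = (NRQ.mk A {s j}).ans t) ∧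
      (∀ t : DTree S arS,
        (NRQ.mk A (Set.range s)).ans t =
          ⋃ j, (NRQ.mk (A' j) {g | ∀ i, g i ∈ SS j i}).ans t) := by
  refine ⟨fun _ => MarkState PQ n, fun _ => inferInstance, fun j => A.marking (s j),
    fun _ => markedAt, fun _ _ _ => disjoint_markedAt, fun _ _ _ hm => TA.existsUnique_markedAt hm,
    fun j => TA.ans_marking (hs j), fun t => ?_⟩
  rw [← Set.iUnion_singleton_eq_range, NRQ.ans_mk_iUnion]
  exact Set.iUnion_congr fun j => (TA.ans_marking (hs j) t).symm

/-- Every n-RQ Q = (A, {s₁,…,s_k}) is the union of k n-RQs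
Q̃¹, …, Q̃ᵏ in normal form, where Q̃ʲ is equivalent with (A, {s_j}). -/
theorem nrq_union_of_normal_forms {S PQ : Type} {arS : S → ℕ} [Fintype S] [Fintype PQ]
    {n k : ℕ} (A : TA S arS PQ) (s : Fin k → Fin n → PQ)
    (hs : ∀ j, Function.Injective (s j)) :
    ∃ (P' : Fin k → Type) (_ : ∀ j, Fintype (P' j)) (A' : ∀ j, TA S arS (P' j))
      (SS : ∀ j, Fin n → Set (P' j)),
      (∀ j, ∀ i i', i ≠ i' → Disjoint (SS j i) (SS j i')) ∧
      (∀ j (t : DTree S arS) (m : List ℕ → P' j), (A' j).IsRun t m →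
        ∀ i, ∃! v, v ∈ t.pos ∧ m v ∈ SS j i) ∧
      (∀ j (t : DTree S arS),
        (NRQ.mk (A' j) {g | ∀ i, g i ∈ SS j i}).ans t = (NRQ.mk A {s j}).ans t) ∧
      (∀ t : DTree S arS,
        (NRQ.mk A (Set.range s)).ans t =
          ⋃ j, (NRQ.mk (A' j) {g | ∀ i, g i ∈ SS j i}).ans t) :=
  nrq_union_of_normal_forms_general A s hs
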